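/- Let m ≥ 1 and n ≥ m be integers. The function r ↦ B_{m,n}(r) is differentiable on (0,∞), and, writing ρ = r/m and B_{m,n}'(r) for its derivative: for every r > 0 with r ≠ m, B_{m,n}'(r) = [ (n − r)/ρ + ( n − r − (1 − ρ^{n−m})/((1 − ρ)·ρ^{n−m}) )·B_{m,n}(r)/(1 − ρ) ] · B_{m,n}(r)/m; and at r = m, B_{m,n}'(m) = [ n − m + (1 + m + n − (1 + n − m)^2)·B_{m,n}(m)/2 ] · B_{m,n}(m)/m. -/

import Mathlib

/-- `a_j(r)` coefficients of the M/M/m/n queue. -/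
noncomputable def aCoef (m j : ℕ) (r : ℝ) : ℝ :=
  if j ≤ m then r ^ j / (Nat.factorial j : ℝ)
  else (r ^ m / (Nat.factorial m : ℝ)) * (r / (m : ℝ)) ^ (j - m)

/-- Blocking probability `B_{m,n}(r)` of the M/M/m/n queue with offered load `r`. -/
noncomputable def Bmn (m n : ℕ) (r : ℝ) : ℝ :=
  aCoef m n r / ∑ j ∈ Finset.range (n + 1), aCoef m j r

/-- Mean number in system `L_{m,n}(r)` of the M/M/m/n queue with offered load `r`. -/
noncomputable def Lmn (m n : ℕ) (r : ℝ) : ℝ :=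
  (∑ j ∈ Finset.range (n + 1), (j : ℝ) * aCoef m j r) /
    ∑ j ∈ Finset.range (n + 1), aCoef m j r

/-- Erlang-B formula `B_m(r)`. -/
noncomputable def erlangB (m : ℕ) (r : ℝ) : ℝ :=
  (r ^ m / (Nat.factorial m : ℝ)) / ∑ j ∈ Finset.range (m + 1), r ^ j / (Nat.factorial j : ℝ)

/-!
Since `r · a_j'(r) = j · a_j(r)`, the quotient rule gives `r B' = B (n - L)`, where `L = Lmn` is the
mean number in system. The recurrences `(j + 1) a_{j+1} = r a_j` for `j < m` and
`a_j = a_m ρ^(j-m)` for `j ≥ m` telescope `∑ (r - j) a_j` to `r a_n - a_m ∑_{t ≤ n-m} t ρ^t`, so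
`n - L = n - r + B (r - ρ^(m-n) ∑_{t ≤ n-m} t ρ^t)`. This arithmetico-geometric sum has a closed
form for `ρ ≠ 1` and is the triangular number `(n - m)(n - m + 1)/2` at `ρ = 1`.
-/

open Finset

lemma aCoef_eq_mul_pow (m j : ℕ) (r : ℝ) : aCoef m j r = aCoef m j 1 * r ^ j := by
  unfold aCoef
  split_ifs with h
  · ring
  · rw [div_pow, ← pow_sub_mul_pow r (not_le.1 h).le]
    ring

lemma aCoef_zero (m : ℕ) (r : ℝ) : aCoef m 0 r = 1 := by
  simp [aCoef]

lemma aCoef_nonneg (m j : ℕ) {r : ℝ} (hr : 0 ≤ r) : 0 ≤ aCoef m j r := by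
  unfold aCoef
  split_ifs <;> positivity

lemma sum_aCoef_pos (m n : ℕ) {r : ℝ} (hr : 0 ≤ r) : 0 < ∑ j ∈ range (n + 1), aCoef m j r := by
  rw [sum_range_succ', aCoef_zero]
  exact add_pos_of_nonneg_of_pos (sum_nonneg fun j _ => aCoef_nonneg m _ hr) one_pos

lemma succ_mul_aCoef_succ {m j : ℕ} (h : j < m) (r : ℝ) :
    (j + 1) * aCoef m (j + 1) r = r * aCoef m j r := by
  have h' : j + 1 ≤ m := h
  simp only [aCoef, if_pos h', if_pos h.le, Nat.factorial_succ, Nat.cast_mul, pow_succ]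
  field_simp
  push_cast
  ring

lemma aCoef_of_le {m j : ℕ} (h : m ≤ j) (r : ℝ) :
    aCoef m j r = aCoef m m r * (r / m) ^ (j - m) := by
  rcases h.lt_or_eq with h | rfl
  · simp [aCoef, not_le.2 h]
  · simp

lemma hasDerivAt_aCoef (m j : ℕ) {r : ℝ} (hr : r ≠ 0) :
    HasDerivAt (aCoef m j) (j * aCoef m j r / r) r := by
  rw [show aCoef m j = fun r => aCoef m j 1 * r ^ j from funext (aCoef_eq_mul_pow m j)]
  refine ((hasDerivAt_pow j r).const_mul _).congr_deriv ?_
  rcases j with _ | k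
  · simp
  · field_simp
    push_cast
    ring

lemma hasDerivAt_sum_aCoef (m n : ℕ) {r : ℝ} (hr : r ≠ 0) :
    HasDerivAt (fun r => ∑ j ∈ range (n + 1), aCoef m j r)
      ((∑ j ∈ range (n + 1), (j : ℝ) * aCoef m j r) / r) r := by
  rw [sum_div]
  exact HasDerivAt.fun_sum fun j _ => hasDerivAt_aCoef m j hr

lemma hasDerivAt_Bmn (m n : ℕ) {r : ℝ} (hr : 0 < r) :
    HasDerivAt (Bmn m n) (Bmn m n r * (n - Lmn m n r) / r) r := by
  have hS := (sum_aCoef_pos m n hr.le).ne'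
  refine ((hasDerivAt_aCoef m n hr.ne').div (hasDerivAt_sum_aCoef m n hr.ne') hS).congr_deriv ?_
  simp only [Bmn, Lmn]
  field_simp

lemma sum_sub_mul_aCoef_of_le {m k : ℕ} (hk : k ≤ m) (r : ℝ) :
    ∑ j ∈ range (k + 1), (r - j) * aCoef m j r = r * aCoef m k r := by
  induction k with
  | zero => simp [aCoef_zero]
  | succ k ih =>
    rw [sum_range_succ, ih (by omega)]
    push_cast
    linear_combination -succ_mul_aCoef_succ hk r

lemma sum_sub_mul_aCoef_of_ge {m n : ℕ} (hm : m ≠ 0) (hn : m ≤ n) (r : ℝ) :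
    ∑ j ∈ range (n + 1), (r - j) * aCoef m j r =
      r * aCoef m n r - aCoef m m r * ∑ t ∈ range (n - m + 1), (t : ℝ) * (r / m) ^ t := by
  induction n, hn using Nat.le_induction with
  | base => simp [sum_sub_mul_aCoef_of_le le_rfl]
  | succ n hn ih =>
    have hρ : r * (r / m) ^ (n - m) = m * (r / m) ^ (n - m + 1) := by
      have hm' : (m : ℝ) ≠ 0 := Nat.cast_ne_zero.2 hm
      rw [pow_succ]
      field_simp
    rw [sum_range_succ, ih, Nat.sub_add_comm hn, sum_range_succ _ (n - m + 1),
      aCoef_of_le hn, aCoef_of_le (by omega : m ≤ n + 1), Nat.sub_add_comm hn]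
    push_cast [Nat.cast_sub hn]
    linear_combination aCoef m m r * hρ

lemma one_sub_sq_mul_sum_range_mul_pow {R : Type*} [CommRing R] (d : ℕ) (x : R) :
    (1 - x) ^ 2 * ∑ t ∈ range (d + 1), (t : R) * x ^ t =
      x * (1 - x ^ d) - d * x ^ (d + 1) * (1 - x) := by
  induction d with
  | zero => simp
  | succ d ih =>
    rw [sum_range_succ, mul_add, ih]
    push_cast
    ring

lemma natCast_sub_Lmn {m n : ℕ} (hm : m ≠ 0) (hn : m ≤ n) {r : ℝ} (hr : 0 < r) :
    n - Lmn m n r = n - r + Bmn m n r *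
      (r - (∑ t ∈ range (n - m + 1), (t : ℝ) * (r / m) ^ t) / (r / m) ^ (n - m)) := by
  have hS := (sum_aCoef_pos m n hr.le).ne'
  have hρ : (r / m) ^ (n - m) ≠ 0 := by positivity
  have h := sum_sub_mul_aCoef_of_ge hm hn r
  simp only [sub_mul, sum_sub_distrib, ← mul_sum, aCoef_of_le hn] at h
  simp only [Lmn, Bmn, aCoef_of_le hn]
  field_simp
  linear_combination h

lemma sum_range_mul_pow_of_ne_one {K : Type*} [Field K] {x : K} (hx : x ≠ 1) (d : ℕ) :
    ∑ t ∈ range (d + 1), (t : K) * x ^ t =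
      (x * (1 - x ^ d) - d * x ^ (d + 1) * (1 - x)) / (1 - x) ^ 2 := by
  rw [eq_div_iff (pow_ne_zero 2 (sub_ne_zero.2 hx.symm)), mul_comm,
    one_sub_sq_mul_sum_range_mul_pow]

lemma sum_range_succ_natCast (d : ℕ) : ∑ t ∈ range (d + 1), (t : ℝ) = d * (d + 1) / 2 := by
  have h := sum_range_id_mul_two (d + 1)
  rw [Nat.add_sub_cancel, mul_comm (d + 1)] at h
  rw [eq_div_iff two_ne_zero, ← Nat.cast_sum]
  exact_mod_cast h

/-- derivative of `r ↦ B_{m,n}(r)`. -/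
theorem stmt_18 (m n : ℕ) (hm : 1 ≤ m) (hn : m ≤ n) :
    (∀ r : ℝ, 0 < r → DifferentiableAt ℝ (fun r => Bmn m n r) r) ∧
    (∀ r : ℝ, 0 < r → r ≠ (m : ℝ) →
      deriv (fun r => Bmn m n r) r =
        (((n : ℝ) - r) / (r / (m : ℝ)) +
            ((n : ℝ) - r -
                (1 - (r / (m : ℝ)) ^ (n - m)) / ((1 - r / (m : ℝ)) * (r / (m : ℝ)) ^ (n - m))) *
              Bmn m n r / (1 - r / (m : ℝ))) *
          Bmn m n r / (m : ℝ)) ∧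
    deriv (fun r => Bmn m n r) (m : ℝ) =
      ((n : ℝ) - (m : ℝ) +
          (1 + (m : ℝ) + (n : ℝ) - (1 + (n : ℝ) - (m : ℝ)) ^ 2) * Bmn m n (m : ℝ) / 2) *
        Bmn m n (m : ℝ) / (m : ℝ) := by
  have hm₀ : (0 : ℝ) < m := by exact_mod_cast hm
  have hm' : (m : ℝ) ≠ 0 := hm₀.ne'
  have hd : ((n - m : ℕ) : ℝ) = n - m := Nat.cast_sub hn
  have hderiv : ∀ r : ℝ, 0 < r → deriv (fun r => Bmn m n r) r = Bmn m n r * (n - r +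
      Bmn m n r * (r - (∑ t ∈ range (n - m + 1), (t : ℝ) * (r / m) ^ t) / (r / m) ^ (n - m))) / r :=
    fun r hr => by rw [(hasDerivAt_Bmn m n hr).deriv, natCast_sub_Lmn (by omega) hn hr]
  refine ⟨fun r hr => (hasDerivAt_Bmn m n hr).differentiableAt, fun r hr hrm => ?_, ?_⟩
  · obtain ⟨ρ, rfl⟩ : ∃ ρ, r = m * ρ := ⟨r / m, by field_simp⟩
    have hρ₀ : ρ ≠ 0 := by rintro rfl; simp at hr
    have hρ₁ : ρ ≠ 1 := by rintro rfl; simp at hrm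
    have h1ρ : 1 - ρ ≠ 0 := sub_ne_zero.2 hρ₁.symm
    rw [hderiv _ hr, mul_div_cancel_left₀ _ hm', sum_range_mul_pow_of_ne_one hρ₁, hd]
    generalize Bmn m n (m * ρ) = B
    field_simp
    ring
  · rw [hderiv m hm₀, div_self hm']
    simp only [one_pow, mul_one, div_one, sum_range_succ_natCast, hd]
    field_simp
    ring
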